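/- arXiv:2411.18097 — 4 statements merged into one kernel-verified Lean document; each statement's English description precedes it below -/
import Mathlib

section
/- Let X be a geodesic metric space, p : X → X a 1-Lipschitz map with image A = p(X), fixing A pointwise. If γ : [0,L] → X is a minimizing geodesic with γ(a), γ(b) ∈ A for some 0 ≤ a < b ≤ L, then the curve obtained by replacing γ on [a,b] with p ∘ γ is also a minimizing geodesic between γ(0) and γ(L). -/
/-!
Every piece of the spliced curve is 1-Lipschitz: on `[a, b]` because `p` is, and across `a` and
`b` because `p` fixes `γ a` and `γ b`. A 1-Lipschitz curve on `[0, L]` whose endpoints are at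
distance `L` is an isometric embedding, since any shortfall between two intermediate times would,
by the triangle inequality, shorten the distance between the endpoints.
-/

open Set NNReal

namespace LipschitzOnWith

variable {Y : Type*}

theorem congr [PseudoEMetricSpace Y] {α : Type*} [PseudoEMetricSpace α] {K : ℝ≥0}
    {f g : α → Y} {s : Set α} (hf : LipschitzOnWith K f s) (h : EqOn f g s) :
    LipschitzOnWith K g s :=
  fun _ hx _ hy => by rw [← h hx, ← h hy]; exact hf hx hy

variable [PseudoMetricSpace Y] {f : ℝ → Y}

theorem Icc_union_Icc {K : ℝ≥0} {x y z : ℝ} (h₁ : LipschitzOnWith K f (Icc x y))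
    (h₂ : LipschitzOnWith K f (Icc y z)) : LipschitzOnWith K f (Icc x z) := by
  refine of_dist_le_mul fun s hs t ht => ?_
  wlog hst : s ≤ t generalizing s t
  · rw [dist_comm, dist_comm s]
    exact this t ht s hs (le_of_not_ge hst)
  rcases le_total t y with hty | hyt
  · exact h₁.dist_le_mul s ⟨hs.1, hst.trans hty⟩ t ⟨ht.1, hty⟩
  rcases le_total y s with hys | hsy
  · exact h₂.dist_le_mul s ⟨hys, hs.2⟩ t ⟨hyt, ht.2⟩
  calc dist (f s) (f t) ≤ dist (f s) (f y) + dist (f y) (f t) := dist_triangle _ _ _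
    _ ≤ K * dist s y + K * dist y t :=
      add_le_add (h₁.dist_le_mul s ⟨hs.1, hsy⟩ y ⟨hs.1.trans hsy, le_rfl⟩)
        (h₂.dist_le_mul y ⟨le_rfl, hyt.trans ht.2⟩ t ⟨hyt, ht.2⟩)
    _ = K * dist s t := by
      simp only [Real.dist_eq, abs_of_nonpos (sub_nonpos.2 hsy), abs_of_nonpos (sub_nonpos.2 hyt),
        abs_of_nonpos (sub_nonpos.2 hst)]
      ring

theorem dist_eq_of_dist_endpoints {u v : ℝ} (hf : LipschitzOnWith 1 f (Icc u v))
    (huv : dist (f u) (f v) = v - u) {s t : ℝ} (hs : s ∈ Icc u v) (ht : t ∈ Icc u v) :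
    dist (f s) (f t) = dist s t := by
  wlog hst : s ≤ t generalizing s t
  · rw [dist_comm, dist_comm s]
    exact this ht hs (le_of_not_ge hst)
  have hdist : ∀ x ∈ Icc u v, ∀ y ∈ Icc u v, x ≤ y → dist (f x) (f y) ≤ y - x :=
    fun x hx y hy hxy => by
      simpa [Real.dist_eq, abs_of_nonpos (sub_nonpos.2 hxy)] using hf.dist_le_mul x hx y hy
  have hu : u ∈ Icc u v := ⟨le_rfl, hs.1.trans hs.2⟩
  have hv : v ∈ Icc u v := ⟨hs.1.trans hs.2, le_rfl⟩
  have h_triangle := dist_triangle4 (f u) (f s) (f t) (f v)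
  have h_us := hdist u hu s hs hs.1
  have h_tv := hdist t ht v hv ht.2
  have h_st := hdist s hs t ht hst
  rw [Real.dist_eq, abs_of_nonpos (sub_nonpos.2 hst)]
  linarith

end LipschitzOnWith

theorem stmt_7_general {X : Type*} [MetricSpace X]
    (p : X → X) (hp : LipschitzWith 1 p)
    (L a b : ℝ) (hab : 0 ≤ a) (hab' : a < b) (hbL : b ≤ L)
    (γ : ℝ → X)
    (hγ : ∀ s ∈ Set.Icc (0:ℝ) L, ∀ t ∈ Set.Icc (0:ℝ) L, dist (γ s) (γ t) = |s - t|)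
    (ha : p (γ a) = γ a) (hb : p (γ b) = γ b) :
    let β : ℝ → X := fun s => if s ∈ Set.Icc a b then p (γ s) else γ s
    β 0 = γ 0 ∧ β L = γ L ∧
      ∀ s ∈ Set.Icc (0:ℝ) L, ∀ t ∈ Set.Icc (0:ℝ) L, dist (β s) (β t) = |s - t| := by
  intro β
  have hγ_lip : LipschitzOnWith 1 γ (Icc 0 L) :=
    LipschitzOnWith.mk_one fun s hs t ht => (hγ s hs t ht).le
  have hβ_left : EqOn γ β (Icc 0 a) := fun s hs => by
    rcases hs.2.eq_or_lt with rfl | hsa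
    · simp [β, ha, hab'.le]
    · simp [β, hsa.not_ge]
  have hβ_mid : EqOn (p ∘ γ) β (Icc a b) := fun s hs => (if_pos hs).symm
  have hβ_right : EqOn γ β (Icc b L) := fun s hs => by
    rcases hs.1.eq_or_lt with rfl | hbs
    · simp [β, hb, hab'.le]
    · simp [β, hbs.not_ge]
  have hβ_lip : LipschitzOnWith 1 β (Icc 0 L) := by
    have h_left := (hγ_lip.mono (Icc_subset_Icc_right (hab'.le.trans hbL))).congr hβ_left
    have h_mid := (mul_one (1 : ℝ≥0) ▸
      hp.comp_lipschitzOnWith (hγ_lip.mono (Icc_subset_Icc hab hbL))).congr hβ_mid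
    have h_right := (hγ_lip.mono (Icc_subset_Icc_left (hab.trans hab'.le))).congr hβ_right
    exact (h_left.Icc_union_Icc h_mid).Icc_union_Icc h_right
  have hβ0 : β 0 = γ 0 := (hβ_left ⟨le_rfl, hab⟩).symm
  have hβL : β L = γ L := (hβ_right ⟨hbL, le_rfl⟩).symm
  have hL : 0 ≤ L := hab.trans (hab'.le.trans hbL)
  refine ⟨hβ0, hβL, fun s hs t ht => ?_⟩
  refine (hβ_lip.dist_eq_of_dist_endpoints ?_ hs ht).trans (Real.dist_eq s t)
  rw [hβ0, hβL, hγ 0 ⟨le_rfl, hL⟩ L ⟨hL, le_rfl⟩, abs_of_nonpos (by linarith)]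
  ring

theorem stmt_7 {X : Type*} [MetricSpace X]
    (hgeo : ∀ x y : X, ∃ c : ℝ → X, c 0 = x ∧ c (dist x y) = y ∧
      ∀ s ∈ Set.Icc (0:ℝ) (dist x y), ∀ t ∈ Set.Icc (0:ℝ) (dist x y),
        dist (c s) (c t) = |s - t|)
    (p : X → X) (hp : LipschitzWith 1 p)
    (hfix : ∀ x, p (p x) = p x)
    (L a b : ℝ) (hab : 0 ≤ a) (hab' : a < b) (hbL : b ≤ L)
    (γ : ℝ → X)
    (hγ : ∀ s ∈ Set.Icc (0:ℝ) L, ∀ t ∈ Set.Icc (0:ℝ) L, dist (γ s) (γ t) = |s - t|)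
    (ha : p (γ a) = γ a) (hb : p (γ b) = γ b) :
    let β : ℝ → X := fun s => if s ∈ Set.Icc a b then p (γ s) else γ s
    β 0 = γ 0 ∧ β L = γ L ∧
      ∀ s ∈ Set.Icc (0:ℝ) L, ∀ t ∈ Set.Icc (0:ℝ) L, dist (β s) (β t) = |s - t| :=
  stmt_7_general p hp L a b hab hab' hbL γ hγ ha hb
end

section
/- In the surface X = ℝ × (ℝ/2πℤ) with the distance induced by ĝ = dt² + (1+|t|)² dθ², the curve c(s) = (0, s), s ∈ [0, π], is a minimizing geodesic from (0,0) to (0,π), i.e. d((0,s),(0,s')) = |s − s'| for all s, s' ∈ [0,π]. -/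
open MeasureTheory Real

/-- The surface `ℝ × (ℝ/2πℤ)`. -/
abbrev GhatSpace : Type := ℝ × AddCircle (2 * Real.pi)

/-- Projection from the universal cover `ℝ × ℝ` to the surface. -/
noncomputable def ghatProj (x : ℝ × ℝ) : GhatSpace := (x.1, (x.2 : AddCircle (2 * Real.pi)))

/-- Length of a curve in `ℝ × ℝ` (lifted coordinates `(t, θ)`) with respect to the
Riemannian metric `ĝ = dt² + (1+|t|)² dθ²`, over the parameter interval `[0,1]`. -/
noncomputable def ghatLength (γ : ℝ → ℝ × ℝ) : ℝ :=
  ∫ s in (0:ℝ)..1,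
    Real.sqrt ((deriv (fun u => (γ u).1) s) ^ 2 +
      (1 + |(γ s).1|) ^ 2 * (deriv (fun u => (γ u).2) s) ^ 2)

/-- The distance on `ℝ × (ℝ/2πℤ)` induced by `ĝ = dt² + (1+|t|)² dθ²`:
the infimum of lengths of `C¹` curves joining the two points. -/
noncomputable def ghatDist (p q : GhatSpace) : ℝ :=
  sInf {l | ∃ γ : ℝ → ℝ × ℝ, ContDiff ℝ 1 γ ∧
    ghatProj (γ 0) = p ∧ ghatProj (γ 1) = q ∧ l = ghatLength γ}

/-!
The integrand of `ghatLength` dominates `|θ'|`, so a curve is at least as long as the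
displacement of its `θ`-lift, hence at least as long as the distance in `ℝ/2πℤ` between the
angles of its endpoints (the quotient map is 1-Lipschitz). For angles within `π` of each other
this circle distance is `|s - s'|`, and the segment `u ↦ (0, s + u (s' - s))` attains it.
-/

namespace AddCircle

variable {p : ℝ}

lemma dist_coe_le_abs_sub (x y : ℝ) : dist (x : AddCircle p) y ≤ |x - y| := by
  rw [dist_eq_norm, ← coe_sub]
  exact QuotientAddGroup.norm_mk_le_norm

lemma dist_coe_eq_abs_sub {x y : ℝ} (hp : p ≠ 0) (hxy : |x - y| ≤ |p| / 2) :
    dist (x : AddCircle p) y = |x - y| := by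
  rw [dist_eq_norm, ← coe_sub, norm_coe_eq_abs_iff p hp]
  exact hxy

end AddCircle

lemma abs_sub_snd_le_ghatLength {γ : ℝ → ℝ × ℝ} (hγ : ContDiff ℝ 1 γ) :
    |(γ 1).2 - (γ 0).2| ≤ ghatLength γ := by
  set t : ℝ → ℝ := fun u => (γ u).1
  set θ : ℝ → ℝ := fun u => (γ u).2
  have ht : ContDiff ℝ 1 t := contDiff_fst.comp hγ
  have hθ : ContDiff ℝ 1 θ := contDiff_snd.comp hγ
  have hθ' : Continuous (deriv θ) := hθ.continuous_deriv le_rfl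
  have integrand_cont : Continuous fun u =>
      √(deriv t u ^ 2 + (1 + |t u|) ^ 2 * deriv θ u ^ 2) := by
    have := ht.continuous_deriv le_rfl
    have := ht.continuous
    fun_prop
  have abs_deriv_le u : |deriv θ u| ≤ √(deriv t u ^ 2 + (1 + |t u|) ^ 2 * deriv θ u ^ 2) := by
    rw [← Real.sqrt_sq_eq_abs]
    gcongr
    have : 1 ≤ (1 + |t u|) ^ 2 := one_le_pow₀ (le_add_of_nonneg_right (abs_nonneg _))
    nlinarith [sq_nonneg (deriv t u), sq_nonneg (deriv θ u)]
  calc |θ 1 - θ 0| = |∫ u in (0:ℝ)..1, deriv θ u| := by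
        rw [intervalIntegral.integral_deriv_eq_sub
          (fun x _ => (hθ.differentiable one_ne_zero).differentiableAt)
          (hθ'.intervalIntegrable 0 1)]
    _ ≤ ∫ u in (0:ℝ)..1, |deriv θ u| := intervalIntegral.abs_integral_le_integral_abs zero_le_one
    _ ≤ ghatLength γ :=
        intervalIntegral.integral_mono_on zero_le_one (hθ'.abs.intervalIntegrable 0 1)
          (integrand_cont.intervalIntegrable 0 1) fun u _ => abs_deriv_le u

lemma ghatLength_vertical_segment (t a b : ℝ) :
    ghatLength (fun u => (t, a + u * (b - a))) = (1 + |t|) * |b - a| := by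
  have hderiv : deriv (fun u : ℝ => a + u * (b - a)) = fun _ => b - a := by
    funext u
    rw [deriv_const_add, deriv_mul_const_field, deriv_id'', one_mul]
  simp only [ghatLength, deriv_const', hderiv]
  rw [intervalIntegral.integral_const, sub_zero, one_smul, zero_pow two_ne_zero, zero_add,
    Real.sqrt_mul' _ (sq_nonneg _), Real.sqrt_sq (by positivity), Real.sqrt_sq_eq_abs]

theorem stmt_10 (s s' : ℝ) (hs : s ∈ Set.Icc 0 Real.pi) (hs' : s' ∈ Set.Icc 0 Real.pi) :
    ghatDist (0, (s : AddCircle (2 * Real.pi))) (0, (s' : AddCircle (2 * Real.pi))) =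
      |s - s'| := by
  have hdist : dist (s : AddCircle (2 * π)) s' = |s - s'| := by
    refine AddCircle.dist_coe_eq_abs_sub (by positivity) ?_
    rw [abs_of_pos Real.two_pi_pos, abs_sub_le_iff]
    constructor <;> linarith [hs.1, hs.2, hs'.1, hs'.2]
  refine IsLeast.csInf_eq ⟨⟨fun u => (0, s + u * (s' - s)), by fun_prop, ?_, ?_, ?_⟩, ?_⟩
  · simp [ghatProj]
  · simp [ghatProj]
  · rw [ghatLength_vertical_segment, abs_zero, add_zero, one_mul, abs_sub_comm]
  · rintro l ⟨γ, hγ, h0, h1, rfl⟩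
    have hθ0 : ((γ 0).2 : AddCircle (2 * π)) = s := congrArg Prod.snd h0
    have hθ1 : ((γ 1).2 : AddCircle (2 * π)) = s' := congrArg Prod.snd h1
    rw [← hdist, ← hθ0, ← hθ1, dist_comm]
    exact (AddCircle.dist_coe_le_abs_sub _ _).trans (abs_sub_snd_le_ghatLength hγ)
end

section
/- The metric space X = ℝ × (ℝ/2πℤ) with the distance induced by ĝ = dt² + (1+|t|)² dθ² is branching: there exist two geodesics γ, β : [0, π] → X with γ(s) = β(s) for all s ∈ [0, π/2] but γ(π) ≠ β(π). -/
open MeasureTheory Real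

/-! The function `H(t, θ) = φ(t) + θ` (`calibration`), where `φ' = √((1+|t|)² - 1)/(1+|t|)`,
is a calibration: its differential has `ĝ`-norm `1` everywhere, so every curve is at least as
long as the change of `H` along it, and a unit-speed curve along which `H` grows at unit rate is
minimizing among curves with the same `H`-increment. Lifting a curve of the surface to `ℝ × ℝ`
changes that increment by a multiple of `2π`, which cannot help when it is at most `π`.
Both geodesics are calibrated by `H`: `γ` runs along the circle `t = 0`, and `β` leaves it
at `θ = π/2` along the tangent half-line in `{t ≥ 0}`. -/

namespace Ghat

noncomputable def radialSlope (u : ℝ) : ℝ := √((1 + |u|) ^ 2 - 1) / (1 + |u|)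

noncomputable def radialPotential (x : ℝ) : ℝ := ∫ u in (0 : ℝ)..x, radialSlope u

noncomputable def calibration (p : ℝ × ℝ) : ℝ := radialPotential p.1 + p.2

@[fun_prop]
theorem continuous_radialSlope : Continuous radialSlope :=
  Continuous.div (by fun_prop) (by fun_prop) fun _ => by positivity

theorem hasDerivAt_radialPotential (x : ℝ) : HasDerivAt radialPotential (radialSlope x) x :=
  (continuous_radialSlope.integral_hasStrictDerivAt 0 x).hasDerivAt

@[simp]
theorem radialPotential_zero : radialPotential 0 = 0 := intervalIntegral.integral_same

theorem radialSlope_sq_add_inv_sq (u : ℝ) : radialSlope u ^ 2 + (1 + |u|)⁻¹ ^ 2 = 1 := by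
  have hr : (0 : ℝ) < 1 + |u| := by positivity
  rw [radialSlope, div_pow, Real.sq_sqrt (by nlinarith [abs_nonneg u])]
  field_simp
  ring

/-- The pointwise form of `|dH| ≤ 1`: Cauchy–Schwarz against the unit vector
`(radialSlope u, (1 + |u|)⁻¹)`. -/
theorem abs_radialSlope_mul_add_le (u a b : ℝ) :
    |radialSlope u * a + b| ≤ √(a ^ 2 + (1 + |u|) ^ 2 * b ^ 2) := by
  set r := 1 + |u|
  have hr : r ≠ 0 := by positivity
  have hunit : radialSlope u ^ 2 + r⁻¹ ^ 2 = 1 := radialSlope_sq_add_inv_sq u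
  have hb : b = r⁻¹ * (r * b) := by field_simp
  have hcs : (radialSlope u * a + r⁻¹ * (r * b)) ^ 2 ≤
      (radialSlope u ^ 2 + r⁻¹ ^ 2) * (a ^ 2 + (r * b) ^ 2) := by
    nlinarith [sq_nonneg (radialSlope u * (r * b) - r⁻¹ * a)]
  rw [← Real.sqrt_sq_eq_abs]
  refine Real.sqrt_le_sqrt ?_
  rw [← hb, hunit, one_mul, mul_pow] at hcs
  exact hcs

theorem abs_calibration_sub_le_ghatLength {c : ℝ → ℝ × ℝ} (hc : ContDiff ℝ 1 c) :
    |calibration (c 1) - calibration (c 0)| ≤ ghatLength c := by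
  set f : ℝ → ℝ := fun u => (c u).1
  set g : ℝ → ℝ := fun u => (c u).2
  have hf : ContDiff ℝ 1 f := hc.fst
  have hg : ContDiff ℝ 1 g := hc.snd
  have hf' := hf.continuous_deriv le_rfl
  have hg' := hg.continuous_deriv le_rfl
  have hderiv : ∀ σ, HasDerivAt (fun σ => calibration (c σ))
      (radialSlope (f σ) * deriv f σ + deriv g σ) σ := fun σ =>
    ((hasDerivAt_radialPotential _).comp σ (hf.differentiable one_ne_zero σ).hasDerivAt).add
      (hg.differentiable one_ne_zero σ).hasDerivAt
  have hcont : Continuous fun σ => radialSlope (f σ) * deriv f σ + deriv g σ := by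
    fun_prop
  calc |calibration (c 1) - calibration (c 0)|
      = |∫ σ in (0 : ℝ)..1, radialSlope (f σ) * deriv f σ + deriv g σ| := by
        rw [intervalIntegral.integral_eq_sub_of_hasDerivAt (fun σ _ => hderiv σ)
          (hcont.intervalIntegrable 0 1)]
    _ ≤ ∫ σ in (0 : ℝ)..1, |radialSlope (f σ) * deriv f σ + deriv g σ| :=
        intervalIntegral.abs_integral_le_integral_abs zero_le_one
    _ ≤ ghatLength c :=
        intervalIntegral.integral_mono_on zero_le_one (hcont.abs.intervalIntegrable 0 1)
          (Continuous.intervalIntegrable (by fun_prop) 0 1)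
          fun σ _ => abs_radialSlope_mul_add_le _ _ _

theorem exists_calibration_sub_eq_of_ghatProj_eq {x y : ℝ × ℝ} (h : ghatProj x = ghatProj y) :
    ∃ k : ℤ, calibration x - calibration y = k * (2 * π) := by
  simp only [ghatProj, Prod.mk.injEq] at h
  obtain ⟨ht, hθ⟩ := h
  have hθ' : ((x.2 - y.2 : ℝ) : AddCircle (2 * π)) = 0 := by
    rw [AddCircle.coe_sub, hθ, sub_self]
  obtain ⟨k, hk⟩ := (AddCircle.coe_eq_zero_iff _).1 hθ'
  refine ⟨k, ?_⟩
  rw [calibration, calibration, ht, ← zsmul_eq_mul, hk]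
  ring

theorem abs_le_abs_add_int_mul_two_pi {a : ℝ} (ha : |a| ≤ π) (k : ℤ) :
    |a| ≤ |a + k * (2 * π)| := by
  rcases abs_le.1 ha with ⟨ha₁, ha₂⟩
  have hπ := Real.pi_pos
  rcases lt_trichotomy k 0 with hk | rfl | hk
  · have hk' : (k : ℝ) * (2 * π) ≤ -(2 * π) := by
      have : (k : ℝ) ≤ -1 := by exact_mod_cast Int.le_sub_one_of_lt hk
      nlinarith
    exact ha.trans (by linarith [neg_le_abs (a + k * (2 * π))])
  · simp
  · have hk' : 2 * π ≤ (k : ℝ) * (2 * π) := by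
      have : (1 : ℝ) ≤ k := by exact_mod_cast hk
      nlinarith
    exact ha.trans (by linarith [le_abs_self (a + k * (2 * π))])

theorem ghatLength_affine_reparam {T Θ T' Θ' : ℝ → ℝ} (hT : ∀ σ, HasDerivAt T (T' σ) σ)
    (hΘ : ∀ σ, HasDerivAt Θ (Θ' σ) σ)
    (hspeed : ∀ σ, T' σ ^ 2 + (1 + |T σ|) ^ 2 * Θ' σ ^ 2 = 1) (s t : ℝ) :
    ghatLength (fun σ => (T (s + σ * (t - s)), Θ (s + σ * (t - s)))) = |t - s| := by
  have hline : ∀ σ : ℝ, HasDerivAt (fun σ => s + σ * (t - s)) (t - s) σ := fun σ => by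
    simpa using ((hasDerivAt_id σ).mul_const (t - s)).const_add s
  have hintegrand : ∀ σ : ℝ,
      √(deriv (fun σ => T (s + σ * (t - s))) σ ^ 2 +
        (1 + |T (s + σ * (t - s))|) ^ 2 * deriv (fun σ => Θ (s + σ * (t - s))) σ ^ 2) =
        |t - s| := fun σ => by
    have hT' : HasDerivAt (fun σ => T (s + σ * (t - s))) (T' _ * (t - s)) σ :=
      (hT _).comp σ (hline σ)
    have hΘ' : HasDerivAt (fun σ => Θ (s + σ * (t - s))) (Θ' _ * (t - s)) σ :=
      (hΘ _).comp σ (hline σ)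
    rw [hT'.deriv, hΘ'.deriv, ← Real.sqrt_sq_eq_abs (t - s)]
    congr 1
    linear_combination (t - s) ^ 2 * hspeed (s + σ * (t - s))
  simp [ghatLength, hintegrand]

theorem contDiff_one_of_hasDerivAt {f f' : ℝ → ℝ} (hf : ∀ σ, HasDerivAt f (f' σ) σ)
    (hf' : Continuous f') : ContDiff ℝ 1 f := by
  rw [contDiff_one_iff_deriv]
  refine ⟨fun σ => (hf σ).differentiableAt, ?_⟩
  rwa [show deriv f = f' from funext fun σ => (hf σ).deriv]

theorem ghatDist_eq_of_calibrated {T Θ T' Θ' : ℝ → ℝ} (hT : ∀ σ, HasDerivAt T (T' σ) σ)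
    (hΘ : ∀ σ, HasDerivAt Θ (Θ' σ) σ) (hT' : Continuous T') (hΘ' : Continuous Θ')
    (hspeed : ∀ σ, T' σ ^ 2 + (1 + |T σ|) ^ 2 * Θ' σ ^ 2 = 1)
    (hcal : ∀ σ, calibration (T σ, Θ σ) = σ) {s t : ℝ} (hst : |s - t| ≤ π) :
    ghatDist (ghatProj (T s, Θ s)) (ghatProj (T t, Θ t)) = |s - t| := by
  rw [ghatDist]
  refine le_antisymm (csInf_le ⟨|s - t|, ?lower⟩ ?curve) (le_csInf ⟨_, ?curve⟩ ?lower)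
  case lower =>
    rintro l ⟨c, hc, h0, h1, rfl⟩
    obtain ⟨k₀, hk₀⟩ := exists_calibration_sub_eq_of_ghatProj_eq h0
    obtain ⟨k₁, hk₁⟩ := exists_calibration_sub_eq_of_ghatProj_eq h1
    rw [hcal] at hk₀ hk₁
    calc |s - t| ≤ |s - t + (k₀ - k₁ : ℤ) * (2 * π)| := abs_le_abs_add_int_mul_two_pi hst _
      _ = |calibration (c 1) - calibration (c 0)| := by
        rw [abs_sub_comm]
        congr 1
        push_cast
        linarith
      _ ≤ ghatLength c := abs_calibration_sub_le_ghatLength hc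
  case curve =>
    refine ⟨fun σ => (T (s + σ * (t - s)), Θ (s + σ * (t - s))), ?_, by simp, by simp, ?_⟩
    · exact ((contDiff_one_of_hasDerivAt hT hT').prodMk
        (contDiff_one_of_hasDerivAt hΘ hΘ')).comp (by fun_prop)
    · rw [ghatLength_affine_reparam hT hΘ hspeed, abs_sub_comm]

theorem hasDerivAt_max_sub_zero_sq (a x : ℝ) :
    HasDerivAt (fun y => max (y - a) 0 ^ 2) (2 * max (x - a) 0) x := by
  refine hasDerivAt_of_hasDerivAt_of_ne' (f := fun y => max (y - a) 0 ^ 2)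
    (g := fun y => 2 * max (y - a) 0) (x := a) (fun y hy => ?_) (by fun_prop) (by fun_prop) x
  rcases hy.lt_or_gt with hy | hy
  · have h : (fun y => max (y - a) 0 ^ 2) =ᶠ[nhds y] fun _ => (0 : ℝ) := by
      filter_upwards [eventually_lt_nhds hy] with z hz
      simp [max_eq_right (sub_nonpos.2 hz.le)]
    rw [max_eq_right (sub_nonpos.2 hy.le), mul_zero]
    exact (hasDerivAt_const y 0).congr_of_eventuallyEq h
  · have h : (fun y => max (y - a) 0 ^ 2) =ᶠ[nhds y] fun z => (z - a) ^ 2 := by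
      filter_upwards [eventually_gt_nhds hy] with z hz
      simp [max_eq_left (sub_nonneg.2 hz.le)]
    rw [max_eq_left (sub_nonneg.2 hy.le)]
    simpa using ((hasDerivAt_id y).sub_const a).pow 2 |>.congr_of_eventuallyEq h

/-- On `{t ≥ 0}` the metric `ĝ` is Euclidean in the polar coordinates `(1 + t, θ)`. In them,
`σ ↦ (tangentT a σ, tangentΘ a σ)` runs at unit speed along the unit circle up to the angle
`a`, then along the half-line tangent to the circle there; `Θ` grows by `arctan (σ - a)`
past `a`. -/
noncomputable def tangentT (a σ : ℝ) : ℝ := √(1 + max (σ - a) 0 ^ 2) - 1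

noncomputable def tangentΘ (a σ : ℝ) : ℝ := a + ∫ u in a..σ, (1 + max (u - a) 0 ^ 2)⁻¹

section Tangent

variable (a σ : ℝ)

theorem hasDerivAt_tangentT :
    HasDerivAt (tangentT a) (max (σ - a) 0 / √(1 + max (σ - a) 0 ^ 2)) σ := by
  refine ((((hasDerivAt_max_sub_zero_sq a σ).const_add 1).sqrt
    (by positivity)).sub_const 1).congr_deriv ?_
  field_simp

theorem hasDerivAt_tangentΘ : HasDerivAt (tangentΘ a) (1 + max (σ - a) 0 ^ 2)⁻¹ σ := by
  have hcont : Continuous fun u : ℝ => (1 + max (u - a) 0 ^ 2)⁻¹ :=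
    Continuous.inv₀ (by fun_prop) fun u => by positivity
  exact (hcont.integral_hasStrictDerivAt a σ).hasDerivAt.const_add a

theorem one_add_abs_tangentT : 1 + |tangentT a σ| = √(1 + max (σ - a) 0 ^ 2) := by
  have : 1 ≤ √(1 + max (σ - a) 0 ^ 2) :=
    Real.one_le_sqrt.2 (le_add_of_nonneg_right (sq_nonneg _))
  rw [tangentT, abs_of_nonneg (by linarith)]
  ring

theorem radialSlope_tangentT :
    radialSlope (tangentT a σ) = max (σ - a) 0 / √(1 + max (σ - a) 0 ^ 2) := by
  rw [radialSlope, one_add_abs_tangentT, Real.sq_sqrt (by positivity), add_sub_cancel_left,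
    Real.sqrt_sq (le_max_right _ _)]

theorem tangent_unit_speed :
    (max (σ - a) 0 / √(1 + max (σ - a) 0 ^ 2)) ^ 2 +
      (1 + |tangentT a σ|) ^ 2 * ((1 + max (σ - a) 0 ^ 2)⁻¹) ^ 2 = 1 := by
  rw [one_add_abs_tangentT, div_pow, Real.sq_sqrt (by positivity)]
  field_simp
  ring

theorem tangentT_of_le {σ : ℝ} (h : σ ≤ a) : tangentT a σ = 0 := by
  simp [tangentT, max_eq_right (sub_nonpos.2 h)]

theorem tangentΘ_of_le {σ : ℝ} (h : σ ≤ a) : tangentΘ a σ = σ := by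
  have : ∀ u ∈ Set.uIcc a σ, (1 + max (u - a) 0 ^ 2)⁻¹ = 1 := fun u hu => by
    rw [Set.uIcc_of_ge h] at hu
    simp [max_eq_right (sub_nonpos.2 hu.2)]
  rw [tangentΘ, intervalIntegral.integral_congr this]
  simp

theorem tangentT_pos {σ : ℝ} (h : a < σ) : 0 < tangentT a σ := by
  rw [tangentT, sub_pos, Real.lt_sqrt zero_le_one, max_eq_left (sub_pos.2 h).le]
  nlinarith [sub_pos.2 h]

theorem calibration_tangent : calibration (tangentT a σ, tangentΘ a σ) = σ := by
  have hderiv : ∀ x, HasDerivAt (fun σ => calibration (tangentT a σ, tangentΘ a σ)) 1 x := by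
    intro x
    refine (((hasDerivAt_radialPotential _).comp x (hasDerivAt_tangentT a x)).add
      (hasDerivAt_tangentΘ a x)).congr_deriv ?_
    rw [radialSlope_tangentT, div_mul_div_comm, ← sq, ← sq, Real.sq_sqrt (by positivity)]
    field_simp
    ring
  have := intervalIntegral.integral_eq_sub_of_hasDerivAt (fun x _ => hderiv x)
    (intervalIntegrable_const (a := a) (b := σ))
  simp only [intervalIntegral.integral_const, smul_eq_mul, mul_one, calibration,
    tangentT_of_le a le_rfl, tangentΘ_of_le a le_rfl, radialPotential_zero, zero_add] at this ⊢
  linarith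

end Tangent

theorem ghatDist_circle {s t : ℝ} (hst : |s - t| ≤ π) :
    ghatDist (ghatProj (0, s)) (ghatProj (0, t)) = |s - t| :=
  ghatDist_eq_of_calibrated (Θ := id) (fun σ => hasDerivAt_const σ 0) hasDerivAt_id
    continuous_const continuous_const (fun _ => by norm_num) (fun _ => by simp [calibration])
    hst

theorem ghatDist_tangent (a : ℝ) {s t : ℝ} (hst : |s - t| ≤ π) :
    ghatDist (ghatProj (tangentT a s, tangentΘ a s)) (ghatProj (tangentT a t, tangentΘ a t)) =
      |s - t| :=
  ghatDist_eq_of_calibrated (hasDerivAt_tangentT a) (hasDerivAt_tangentΘ a)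
    (Continuous.div (by fun_prop) (by fun_prop) fun _ => by positivity)
    (Continuous.inv₀ (by fun_prop) fun _ => by positivity) (tangent_unit_speed a)
    (calibration_tangent a) hst

end Ghat

open Ghat in
/-- The surface `(ℝ × (ℝ/2πℤ), ĝ)` is branching: two geodesics that agree on
`[0, π/2]` but have different endpoints at `π`. -/
theorem stmt_11 :
    ∃ γ β : ℝ → GhatSpace,
      (∀ s ∈ Set.Icc (0:ℝ) Real.pi, ∀ t ∈ Set.Icc (0:ℝ) Real.pi,
        ghatDist (γ s) (γ t) = |s - t|) ∧
      (∀ s ∈ Set.Icc (0:ℝ) Real.pi, ∀ t ∈ Set.Icc (0:ℝ) Real.pi,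
        ghatDist (β s) (β t) = |s - t|) ∧
      (∀ s ∈ Set.Icc (0:ℝ) (Real.pi / 2), γ s = β s) ∧
      γ Real.pi ≠ β Real.pi := by
  have hIcc : ∀ s ∈ Set.Icc 0 π, ∀ t ∈ Set.Icc 0 π, |s - t| ≤ π := fun s hs t ht =>
    abs_sub_le_of_nonneg_of_le hs.1 hs.2 ht.1 ht.2
  refine ⟨fun s => ghatProj (0, s), fun s => ghatProj (tangentT (π / 2) s, tangentΘ (π / 2) s),
    fun s hs t ht => ghatDist_circle (hIcc s hs t ht),
    fun s hs t ht => ghatDist_tangent _ (hIcc s hs t ht), fun s hs => ?_, fun h => ?_⟩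
  · simp only [tangentT_of_le _ hs.2, tangentΘ_of_le _ hs.2]
  · have hT : 0 = tangentT (π / 2) π := congrArg Prod.fst h
    exact (tangentT_pos _ (by linarith [pi_pos])).ne hT
end

section
/- In the region Ω₊ = {(t,θ) : t ≥ 0} of (ℝ × (ℝ/2πℤ), ĝ), identified with ℝ² ∖ int(𝔻²) via polar coordinates (r,θ) with r = 1+t, a Euclidean segment [p,q] joining two points p, q ∈ ℝ² ∖ int(𝔻²) that does not meet the open unit disk is a minimizing geodesic of (X, d). -/
/-!
The map `(t, θ) ↦ (1 + t) e^{iθ}` from the universal cover `ℝ × ℝ` to `ℂ` has speed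
`√(t'² + (1 + t)² θ'²)` along a curve, which is at most the `ĝ`-speed `√(t'² + (1 + |t|)² θ'²)`
and equals it where `t ≥ 0`. Hence every curve joining the two points has `ĝ`-length at least the
Euclidean length of its image, so at least `‖p - q‖`. Conversely, the segment stays in `{‖z‖ ≥ 1}`, so it lifts
through this map to a `C¹` curve in `{t ≥ 0}` (its argument is a primitive of `Im (c' / c)`),
whose `ĝ`-length is therefore exactly `‖p - q‖`.
-/

open MeasureTheory Real

/-- Identification of the exterior of the unit disk in `ℂ ≃ ℝ²` (polar coordinates
`r = 1 + t`) with the region `Ω₊ = {t ≥ 0}` of the surface. -/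
noncomputable def polarToGhat (z : ℂ) : GhatSpace :=
  (‖z‖ - 1, (Complex.arg z : AddCircle (2 * Real.pi)))

open Complex

theorem addCircle_coe_eq_coe_iff_exp_mul_I {a b : ℝ} :
    (a : AddCircle (2 * Real.pi)) = b ↔ exp (a * I) = exp (b * I) := by
  rw [← (AddCircle.injective_toCircle Real.two_pi_pos.ne').eq_iff, AddCircle.toCircle_apply_mk,
    AddCircle.toCircle_apply_mk, div_self Real.two_pi_pos.ne', one_mul, one_mul, ← Circle.coe_inj,
    Circle.coe_exp, Circle.coe_exp]

noncomputable def ghatToPlane (x : ℝ × ℝ) : ℂ := ((1 + x.1 : ℝ) : ℂ) * exp (x.2 * I)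

theorem contDiff_ghatToPlane {n : WithTop ℕ∞} : ContDiff ℝ n ghatToPlane :=
  (ofRealCLM.contDiff.comp (contDiff_const.add contDiff_fst)).mul
    ((ofRealCLM.contDiff.comp contDiff_snd).mul contDiff_const).cexp

theorem ghatToPlane_of_ghatProj_eq_polarToGhat {x : ℝ × ℝ} {z : ℂ}
    (h : ghatProj x = polarToGhat z) : ghatToPlane x = z := by
  obtain ⟨h₁, h₂⟩ := Prod.mk.inj h
  rw [ghatToPlane, h₁, addCircle_coe_eq_coe_iff_exp_mul_I.1 h₂, add_sub_cancel,
    norm_mul_exp_arg_mul_I]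

theorem ghatProj_eq_polarToGhat_ghatToPlane {x : ℝ × ℝ} (hx : 0 < 1 + x.1) :
    ghatProj x = polarToGhat (ghatToPlane x) := by
  have hnorm : ‖ghatToPlane x‖ = 1 + x.1 := by
    rw [ghatToPlane, norm_mul, norm_exp_ofReal_mul_I, mul_one, norm_real, Real.norm_of_nonneg hx.le]
  refine Prod.ext (by simp [polarToGhat, ghatProj, hnorm]) ?_
  refine addCircle_coe_eq_coe_iff_exp_mul_I.2 (mul_left_cancel₀ (ofReal_ne_zero.2 hx.ne') ?_)
  rw [← hnorm, norm_mul_exp_arg_mul_I, hnorm]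
  rfl

section Speed

variable {γ : ℝ → ℝ × ℝ} {s : ℝ}

theorem hasDerivAt_ghatToPlane_comp (hγ : DifferentiableAt ℝ γ s) :
    HasDerivAt (fun u => ghatToPlane (γ u))
      ((deriv (fun u => (γ u).1) s + ((1 + (γ s).1) * deriv (fun u => (γ u).2) s : ℝ) * I) *
        exp ((γ s).2 * I)) s := by
  have ht := hγ.fst.hasDerivAt.ofReal_comp.const_add 1
  have hθ := (hγ.snd.hasDerivAt.ofReal_comp.mul_const I).cexp
  have hF : (fun u => ghatToPlane (γ u)) = fun u => (1 + ((γ u).1 : ℂ)) * exp ((γ u).2 * I) := by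
    funext u
    rw [ghatToPlane, ofReal_add, ofReal_one]
  rw [hF]
  exact (ht.mul hθ).congr_deriv (by push_cast; ring)

theorem norm_deriv_ghatToPlane_comp (hγ : DifferentiableAt ℝ γ s) :
    ‖deriv (fun u => ghatToPlane (γ u)) s‖ =
      √(deriv (fun u => (γ u).1) s ^ 2 + ((1 + (γ s).1) * deriv (fun u => (γ u).2) s) ^ 2) := by
  rw [(hasDerivAt_ghatToPlane_comp hγ).deriv, norm_mul, norm_exp_ofReal_mul_I, mul_one,
    norm_add_mul_I]

theorem norm_deriv_ghatToPlane_comp_le (hγ : DifferentiableAt ℝ γ s) :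
    ‖deriv (fun u => ghatToPlane (γ u)) s‖ ≤
      √(deriv (fun u => (γ u).1) s ^ 2 +
        (1 + |(γ s).1|) ^ 2 * deriv (fun u => (γ u).2) s ^ 2) := by
  have h : (1 + (γ s).1) ^ 2 ≤ (1 + |(γ s).1|) ^ 2 := by
    nlinarith [sq_abs (γ s).1, le_abs_self (γ s).1]
  rw [norm_deriv_ghatToPlane_comp hγ, mul_pow]
  gcongr

end Speed

section Length

variable {γ : ℝ → ℝ × ℝ}

theorem norm_sub_le_ghatLength (hγ : ContDiff ℝ 1 γ) :
    ‖ghatToPlane (γ 1) - ghatToPlane (γ 0)‖ ≤ ghatLength γ := by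
  have hF : ContDiff ℝ 1 fun u => ghatToPlane (γ u) := contDiff_ghatToPlane.comp hγ
  have hlen : Continuous fun s => √(deriv (fun u => (γ u).1) s ^ 2 +
      (1 + |(γ s).1|) ^ 2 * deriv (fun u => (γ u).2) s ^ 2) := by
    have h₁ := hγ.fst.continuous_deriv le_rfl
    have h₂ := hγ.snd.continuous_deriv le_rfl
    have h₃ := hγ.continuous
    fun_prop
  calc ‖ghatToPlane (γ 1) - ghatToPlane (γ 0)‖
      = ‖∫ s in (0 : ℝ)..1, deriv (fun u => ghatToPlane (γ u)) s‖ := by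
        rw [intervalIntegral.integral_deriv_eq_sub (fun s _ => hF.differentiable one_ne_zero s)
          ((hF.continuous_deriv le_rfl).intervalIntegrable 0 1)]
    _ ≤ ∫ s in (0 : ℝ)..1, ‖deriv (fun u => ghatToPlane (γ u)) s‖ :=
        intervalIntegral.norm_integral_le_integral_norm zero_le_one
    _ ≤ ghatLength γ :=
        intervalIntegral.integral_mono_on zero_le_one
          ((hF.continuous_deriv le_rfl).norm.intervalIntegrable 0 1) (hlen.intervalIntegrable 0 1)
          fun s _ => norm_deriv_ghatToPlane_comp_le (hγ.differentiable one_ne_zero s)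

theorem ghatLength_eq_integral_norm_deriv (hγ : Differentiable ℝ γ) (hpos : ∀ s, 0 ≤ (γ s).1) :
    ghatLength γ = ∫ s in (0 : ℝ)..1, ‖deriv (fun u => ghatToPlane (γ u)) s‖ := by
  refine intervalIntegral.integral_congr fun s _ => ?_
  simp only [norm_deriv_ghatToPlane_comp (hγ s), abs_of_nonneg (hpos s), mul_pow]

end Length

theorem exists_contDiff_arg_lift {c : ℝ → ℂ} (hc : ContDiff ℝ 1 c) (hc0 : ∀ s, c s ≠ 0) :
    ∃ θ : ℝ → ℝ, ContDiff ℝ 1 θ ∧ ∀ s, (‖c s‖ : ℂ) * exp (θ s * I) = c s := by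
  set g : ℝ → ℂ := fun s => deriv c s / c s
  have hg : Continuous g := (hc.continuous_deriv le_rfl).div hc.continuous hc0
  set w : ℝ → ℂ := fun s => ∫ u in (0 : ℝ)..s, g u
  have hw : ∀ s, HasDerivAt w (g s) s := fun s => (hg.integral_hasStrictDerivAt 0 s).hasDerivAt
  have hw_contDiff : ContDiff ℝ 1 w := by
    refine contDiff_one_iff_deriv.2 ⟨fun s => (hw s).differentiableAt, ?_⟩
    rwa [funext fun s => (hw s).deriv]
  have hcw : ∀ s, c s = c 0 * exp (w s) := by
    -- `w' = c' / c` makes the derivative `c' e^{-w} - c w' e^{-w}` of `c e^{-w}` vanish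
    have hderiv : ∀ s, HasDerivAt (fun u => c u * exp (-w u)) 0 s := fun s => by
      refine ((hc.differentiable one_ne_zero s).hasDerivAt.mul (hw s).neg.cexp).congr_deriv ?_
      simp only [g]
      field_simp [hc0 s]
      ring
    intro s
    have h := is_const_of_deriv_eq_zero (fun u => (hderiv u).differentiableAt)
      (fun u => (hderiv u).deriv) s 0
    simp only [show w 0 = 0 from intervalIntegral.integral_same, neg_zero, Complex.exp_zero,
      mul_one] at h
    rw [← h, mul_assoc, ← Complex.exp_add, neg_add_cancel, Complex.exp_zero, mul_one]
  refine ⟨fun s => arg (c 0) + (w s).im, contDiff_const.add (imCLM.contDiff.comp hw_contDiff),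
    fun s => ?_⟩
  calc (‖c s‖ : ℂ) * exp ((arg (c 0) + (w s).im : ℝ) * I)
      = ‖c 0‖ * exp (arg (c 0) * I) * exp ((w s).re + (w s).im * I) := by
        rw [hcw s, norm_mul, norm_exp, Complex.exp_add, ofReal_mul, ofReal_exp, ofReal_add,
          add_mul, Complex.exp_add]
        ring
    _ = c s := by rw [norm_mul_exp_arg_mul_I, re_add_im, ← hcw s]

theorem exists_ghatToPlane_lift {c : ℝ → ℂ} (hc : ContDiff ℝ 1 c) (hc1 : ∀ s, 1 ≤ ‖c s‖) :
    ∃ γ : ℝ → ℝ × ℝ, ContDiff ℝ 1 γ ∧ (∀ s, 0 ≤ (γ s).1) ∧ ∀ s, ghatToPlane (γ s) = c s := by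
  have hc0 : ∀ s, c s ≠ 0 := fun s => norm_pos_iff.1 (zero_lt_one.trans_le (hc1 s))
  obtain ⟨θ, hθ, hcθ⟩ := exists_contDiff_arg_lift hc hc0
  refine ⟨fun s => (‖c s‖ - 1, θ s), ((hc.norm ℝ hc0).sub contDiff_const).prodMk hθ,
    fun s => sub_nonneg.2 (hc1 s), fun s => ?_⟩
  rw [ghatToPlane, add_sub_cancel, hcθ]

section SegmentPath

variable {E : Type*} [NormedAddCommGroup E] [NormedSpace ℝ E]

/-- The cosine profile keeps the smooth path inside the segment for every `s : ℝ`, not only for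
`s ∈ [0, 1]`. -/
noncomputable def segmentPath (p q : E) (s : ℝ) : E := p + ((1 - Real.cos (π * s)) / 2) • (q - p)

theorem hasDerivAt_segmentPath (p q : E) (s : ℝ) :
    HasDerivAt (segmentPath p q) ((π * Real.sin (π * s) / 2) • (q - p)) s := by
  have h := (((hasDerivAt_id' s).const_mul π).cos.const_sub 1).div_const 2
  refine ((h.smul_const (q - p)).const_add p).congr_deriv ?_
  congr 1
  ring

theorem contDiff_segmentPath (p q : E) : ContDiff ℝ 1 (segmentPath p q) := by
  unfold segmentPath
  fun_prop

theorem segmentPath_zero (p q : E) : segmentPath p q 0 = p := by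
  simp [segmentPath]

theorem segmentPath_one (p q : E) : segmentPath p q 1 = q := by
  norm_num [segmentPath]

theorem segmentPath_mem_segment (p q : E) (s : ℝ) : segmentPath p q s ∈ segment ℝ p q := by
  rw [segment_eq_image']
  refine ⟨_, ⟨?_, ?_⟩, rfl⟩ <;> linarith [Real.neg_one_le_cos (π * s), Real.cos_le_one (π * s)]

theorem integral_norm_deriv_segmentPath (p q : E) :
    ∫ s in (0 : ℝ)..1, ‖deriv (segmentPath p q) s‖ = ‖q - p‖ := by
  have hnorm : ∀ s ∈ Set.uIcc (0 : ℝ) 1,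
      ‖deriv (segmentPath p q) s‖ = π * Real.sin (π * s) / 2 * ‖q - p‖ := by
    intro s hs
    rw [Set.uIcc_of_le zero_le_one] at hs
    have : 0 ≤ Real.sin (π * s) := Real.sin_nonneg_of_nonneg_of_le_pi (by nlinarith [hs.1, pi_pos])
      (by nlinarith [hs.2, pi_pos])
    rw [(hasDerivAt_segmentPath p q s).deriv, norm_smul, Real.norm_of_nonneg (by positivity)]
  have hsin : ∫ s in (0 : ℝ)..1, π * Real.sin (π * s) / 2 = 1 := by
    rw [intervalIntegral.integral_div, intervalIntegral.integral_const_mul,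
      intervalIntegral.integral_comp_mul_left (fun x => Real.sin x) pi_ne_zero, integral_sin]
    field_simp
    norm_num
  rw [intervalIntegral.integral_congr hnorm, intervalIntegral.integral_mul_const, hsin, one_mul]

end SegmentPath

theorem stmt_12_general (p q : ℂ) (hseg : ∀ z ∈ segment ℝ p q, 1 ≤ ‖z‖) :
    ghatDist (polarToGhat p) (polarToGhat q) = ‖p - q‖ := by
  obtain ⟨γ, hγ, hγ_nonneg, hγ_plane⟩ := exists_ghatToPlane_lift (contDiff_segmentPath p q)
    fun s => hseg _ (segmentPath_mem_segment p q s)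
  have hproj : ∀ s, ghatProj (γ s) = polarToGhat (segmentPath p q s) := fun s => by
    rw [← hγ_plane]
    exact ghatProj_eq_polarToGhat_ghatToPlane (by linarith [hγ_nonneg s])
  refine IsLeast.csInf_eq ⟨⟨γ, hγ, ?_, ?_, ?_⟩, ?_⟩
  · rw [hproj, segmentPath_zero]
  · rw [hproj, segmentPath_one]
  · rw [ghatLength_eq_integral_norm_deriv (hγ.differentiable one_ne_zero) hγ_nonneg,
      funext hγ_plane, integral_norm_deriv_segmentPath, norm_sub_rev]
  · rintro _ ⟨γ', hγ', h0, h1, rfl⟩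
    rw [← ghatToPlane_of_ghatProj_eq_polarToGhat h0, ← ghatToPlane_of_ghatProj_eq_polarToGhat h1,
      norm_sub_rev]
    exact norm_sub_le_ghatLength hγ'

theorem stmt_12 (p q : ℂ) (hp : 1 ≤ ‖p‖) (hq : 1 ≤ ‖q‖)
    (hseg : ∀ z ∈ segment ℝ p q, 1 ≤ ‖z‖) :
    ghatDist (polarToGhat p) (polarToGhat q) = ‖p - q‖ :=
  stmt_12_general p q hseg
end
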